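/- arXiv:2309.13689 — 2 statements merged into one kernel-verified Lean document; each statement's English description precedes it below -/
import Mathlib

section
/- Let G be a connected simple graph with at least one edge in which every vertex has degree at least 2. Then ABC(G) ≤ ABS(G), where ABC(G) = Σ_{uv ∈ E(G)} sqrt((d_u + d_v − 2)/(d_u·d_v)) and ABS(G) = Σ_{uv ∈ E(G)} sqrt((d_u + d_v − 2)/(d_u + d_v)). -/
open Finset

noncomputable def ABCindex {V : Type*} [Fintype V] [DecidableEq V] (G : SimpleGraph V)
    [DecidableRel G.Adj] : ℝ :=
  ∑ e ∈ G.edgeFinset, Sym2.lift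
    ⟨fun u v => Real.sqrt (((G.degree u : ℝ) + (G.degree v : ℝ) - 2) /
        ((G.degree u : ℝ) * (G.degree v : ℝ))),
      by intro u v; simp only []; ring_nf⟩ e

noncomputable def ABSindex {V : Type*} [Fintype V] [DecidableEq V] (G : SimpleGraph V)
    [DecidableRel G.Adj] : ℝ :=
  ∑ e ∈ G.edgeFinset, Sym2.lift
    ⟨fun u v => Real.sqrt (((G.degree u : ℝ) + (G.degree v : ℝ) - 2) /
        ((G.degree u : ℝ) + (G.degree v : ℝ))),
      by intro u v; simp only []; ring_nf⟩ e

theorem abc_le_abs_of_min_degree_two {V : Type*} [Fintype V] [DecidableEq V]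
    (G : SimpleGraph V) [DecidableRel G.Adj]
    (hconn : G.Connected) (hedge : G.edgeFinset.Nonempty)
    (hdeg : ∀ v : V, 2 ≤ G.degree v) :
    ABCindex G ≤ ABSindex G := by
  unfold ABCindex ABSindex
  apply Finset.sum_le_sum
  intro e he
  induction e with
  | _ u v =>
    simp only [Sym2.lift_mk]
    have hu : (2:ℝ) ≤ G.degree u := by exact_mod_cast hdeg u
    have hv : (2:ℝ) ≤ G.degree v := by exact_mod_cast hdeg v
    apply Real.sqrt_le_sqrt
    apply div_le_div_of_nonneg_left
    · linarith
    · linarith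
    · nlinarith
end

section
/- Let G be a connected simple graph with minimum degree at least 2. Then ABC(G) = ABS(G) if and only if G is 2-regular (i.e., every vertex has degree exactly 2). -/
open Finset

lemma abc_key_le (A B : ℝ) (hA : 2 ≤ A) (hB : 2 ≤ B) :
    Real.sqrt ((A + B - 2) / (A * B)) ≤ Real.sqrt ((A + B - 2) / (A + B)) := by
  apply Real.sqrt_le_sqrt
  apply div_le_div_of_nonneg_left (by linarith) (by linarith)
  nlinarith

lemma abc_key_eq (A B : ℝ) (hA : 2 ≤ A) (hB : 2 ≤ B)
    (h : Real.sqrt ((A + B - 2) / (A * B)) = Real.sqrt ((A + B - 2) / (A + B))) :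
    A = 2 ∧ B = 2 := by
  have hAB : (0:ℝ) < A * B := by nlinarith
  have hS : (0:ℝ) < A + B := by linarith
  have hc : (0:ℝ) < A + B - 2 := by linarith
  have h1 : (A + B - 2) / (A * B) = (A + B - 2) / (A + B) := by
    have h1 : 0 ≤ (A + B - 2) / (A * B) := by positivity
    have h2 : 0 ≤ (A + B - 2) / (A + B) := by positivity
    exact (Real.sqrt_inj h1 h2).mp h
  have h2 : A * B = A + B := by
    have := (div_eq_div_iff (ne_of_gt hAB) (ne_of_gt hS)).mp h1
    have h3 : (A + B - 2) * (A + B) = (A + B - 2) * (A * B) := by linarith [this]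
    have := mul_left_cancel₀ (ne_of_gt hc) h3
    linarith
  constructor <;> nlinarith [mul_nonneg (by linarith : (0:ℝ) ≤ A - 2) (by linarith : (0:ℝ) ≤ B - 1),
    mul_nonneg (by linarith : (0:ℝ) ≤ B - 2) (by linarith : (0:ℝ) ≤ A - 1)]

theorem abc_eq_abs_iff_two_regular {V : Type*} [Fintype V] [DecidableEq V]
    (G : SimpleGraph V) [DecidableRel G.Adj]
    (hconn : G.Connected) (hdeg : ∀ v : V, 2 ≤ G.degree v) :
    ABCindex G = ABSindex G ↔ ∀ v : V, G.degree v = 2 := by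
  have hdegR : ∀ v : V, (2:ℝ) ≤ (G.degree v : ℝ) := by
    intro v; exact_mod_cast hdeg v
  have hle : ∀ e ∈ G.edgeFinset,
      Sym2.lift ⟨fun u v => Real.sqrt (((G.degree u : ℝ) + (G.degree v : ℝ) - 2) /
        ((G.degree u : ℝ) * (G.degree v : ℝ))), by intro u v; simp only []; ring_nf⟩ e ≤
      Sym2.lift ⟨fun u v => Real.sqrt (((G.degree u : ℝ) + (G.degree v : ℝ) - 2) /
        ((G.degree u : ℝ) + (G.degree v : ℝ))), by intro u v; simp only []; ring_nf⟩ e := by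
    intro e _
    induction e using Sym2.ind with
    | _ u v => exact abc_key_le _ _ (hdegR u) (hdegR v)
  constructor
  · intro h v
    have hall := (Finset.sum_eq_sum_iff_of_le hle).mp h
    obtain ⟨u, hu⟩ : ∃ u, G.Adj v u := by
      have hpos : 0 < G.degree v := lt_of_lt_of_le (by norm_num) (hdeg v)
      rw [← SimpleGraph.card_neighborFinset_eq_degree] at hpos
      obtain ⟨u, hu⟩ := Finset.card_pos.mp hpos
      exact ⟨u, (SimpleGraph.mem_neighborFinset G v u).mp hu⟩
    have hmem : s(v, u) ∈ G.edgeFinset := by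
      rw [SimpleGraph.mem_edgeFinset]; exact hu
    have := hall s(v, u) hmem
    simp only [Sym2.lift_mk] at this
    exact_mod_cast (abc_key_eq _ _ (hdegR v) (hdegR u) this).1
  · intro h
    unfold ABCindex ABSindex
    apply Finset.sum_congr rfl
    intro e _
    induction e using Sym2.ind with
    | _ u v =>
      simp only [Sym2.lift_mk, h u, h v]
      norm_num
end
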